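/- arXiv:1501.00148 — 7 statements merged into one kernel-verified Lean document; each statement's English description precedes it below -/
import Mathlib

section
/- Let V be a 4-dimensional real vector space, t : V → ℝ a nonzero linear functional, and h : (V →ₗ ℝ) → V a linear map such that t(h(α)) = 0 for every covector α and such that the range of h is 3-dimensional. If κ : V × V → ℝ is an alternating bilinear form with κ(h(α), h(β)) = 0 for all covectors α, β, then there exists a linear functional σ : V → ℝ such that κ(u,v) = t(u)·σ(v) − σ(u)·t(v) for all u, v ∈ V. -/
/-!
The range of `h` lies in the hyperplane `ker t` and has its dimension, so it is `ker t`; hence `κ`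
vanishes on `ker t × ker t`. With `t w = 1`, every vector splits as a part in `ker t` plus a multiple
of `w`, and expanding `κ` along this splitting gives the formula with `σ = κ w`.
-/

open LinearMap Module

theorem LinearMap.range_eq_ker_of_finrank_add_one {K V W : Type*} [Field K] [AddCommGroup V]
    [Module K V] [FiniteDimensional K V] [AddCommGroup W] [Module K W]
    {t : V →ₗ[K] K} (ht : t ≠ 0) {h : W →ₗ[K] V} (hth : ∀ x, t (h x) = 0)
    (hrank : finrank K (range h) + 1 = finrank K V) :
    range h = ker t := by
  refine Submodule.eq_of_le_of_finrank_eq ?_ ?_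
  · rintro _ ⟨x, rfl⟩
    exact hth x
  · have := Dual.finrank_ker_add_one_of_ne_zero ht
    omega

theorem LinearMap.IsAlt.exists_eq_mul_sub_mul_of_ker {K V : Type*} [Field K] [AddCommGroup V]
    [Module K V] {κ : V →ₗ[K] V →ₗ[K] K} (hκ : κ.IsAlt) {t : V →ₗ[K] K} (ht : t ≠ 0)
    (hker : ∀ u ∈ ker t, ∀ v ∈ ker t, κ u v = 0) :
    ∃ σ : V →ₗ[K] K, ∀ u v, κ u v = t u * σ v - σ u * t v := by
  obtain ⟨w, hw⟩ := LinearMap.surjective ht 1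
  refine ⟨κ w, fun u v => ?_⟩
  have hproj : ∀ x, x - t x • w ∈ ker t := fun x => by simp [hw]
  have hzero := hker _ (hproj u) _ (hproj v)
  simp only [map_sub, map_smul, sub_apply, smul_apply, smul_eq_mul, hκ.self_eq_zero w,
    ← hκ.neg w u] at hzero
  linear_combination hzero

/-- On a 4-dimensional real vector space with temporal functional `t`
and spatial metric `h : V* → V` (with `t ∘ h = 0` and rank 3), an antisymmetric
bilinear form `κ` whose "index-raised" version `κ(h α, h β)` vanishes must have the
form `κ(u,v) = t(u)·σ(v) − σ(u)·t(v)`. -/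
theorem maxwell_huygens_stmt1
    (V : Type*) [AddCommGroup V] [Module ℝ V] [FiniteDimensional ℝ V]
    (hdim : Module.finrank ℝ V = 4)
    (t : V →ₗ[ℝ] ℝ) (ht : t ≠ 0)
    (h : (V →ₗ[ℝ] ℝ) →ₗ[ℝ] V)
    (hth : ∀ α : V →ₗ[ℝ] ℝ, t (h α) = 0)
    (hrank : Module.finrank ℝ (LinearMap.range h) = 3)
    (κ : V →ₗ[ℝ] V →ₗ[ℝ] ℝ)
    (hanti : ∀ u v : V, κ u v = - κ v u)
    (hraised : ∀ α β : V →ₗ[ℝ] ℝ, κ (h α) (h β) = 0) :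
    ∃ σ : V →ₗ[ℝ] ℝ, ∀ u v : V, κ u v = t u * σ v - σ u * t v := by
  have hκ : κ.IsAlt := fun w => by linarith [hanti w w]
  have hrange : range h = ker t :=
    range_eq_ker_of_finrank_add_one ht hth (by rw [hrank, hdim])
  refine hκ.exists_eq_mul_sub_mul_of_ker ht fun u hu v hv => ?_
  rw [← hrange] at hu hv
  obtain ⟨α, rfl⟩ := hu
  obtain ⟨β, rfl⟩ := hv
  exact hraised α β
end

section
/- Let V be a real vector space, t : V → ℝ a linear functional, and h : (V →ₗ ℝ) → V a linear map satisfying t(h(α)) = 0 for all covectors α and the symmetry condition β(h(α)) = α(h(β)) for all covectors α, β. Let κ : V × V → ℝ be an alternating bilinear form, let ξ ∈ V with t(ξ) = 1, and let L : V → V be linear. Define L' : V → V by L'(v) = L(v) + t(v)·h(κ(ξ, ·)) + h(κ(v, ·)). Then for all covectors α, β: β(L'(h(α))) − α(L'(h(β))) = β(L(h(α))) − α(L(h(β))) + 2·κ(h(α), h(β)). -/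
/-- The central computation of Proposition 1: if `L' v = L v + C(v, ξ)`
with `C(v,ξ) = t(v)·h(κ(ξ,·)) + t(ξ)·h(κ(v,·))` and `t ξ = 1`, then the rotations of
`L'` and `L` differ by exactly `2·κ(h α, h β)`. -/
theorem maxwell_huygens_stmt2
    (V : Type*) [AddCommGroup V] [Module ℝ V]
    (t : V →ₗ[ℝ] ℝ)
    (h : (V →ₗ[ℝ] ℝ) →ₗ[ℝ] V)
    (hth : ∀ α : V →ₗ[ℝ] ℝ, t (h α) = 0)
    (hsymm : ∀ α β : V →ₗ[ℝ] ℝ, β (h α) = α (h β))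
    (κ : V →ₗ[ℝ] V →ₗ[ℝ] ℝ)
    (hanti : ∀ u v : V, κ u v = - κ v u)
    (ξ : V) (hξ : t ξ = 1)
    (L : V →ₗ[ℝ] V)
    (L' : V → V)
    (hL' : ∀ v : V, L' v = L v + t v • h (κ ξ) + h (κ v)) :
    ∀ α β : V →ₗ[ℝ] ℝ,
      β (L' (h α)) - α (L' (h β))
        = β (L (h α)) - α (L (h β)) + 2 * κ (h α) (h β) := by
  intro α β
  rw [hL', hL']
  simp only [map_add, map_smul, hth, zero_smul, smul_eq_mul, zero_mul, add_zero]
  have h1 : β (h (κ (h α))) = κ (h α) (h β) := hsymm _ _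
  have h2 : α (h (κ (h β))) = κ (h β) (h α) := hsymm _ _
  rw [h1, h2, hanti (h β) (h α)]
  ring
end

section
/- Let V be a real vector space and t : V → ℝ a linear functional that attains the value 1 (equivalently, t is nonzero). Let B : V × V → V be a symmetric bilinear map such that B(ξ, ξ) = 0 for every ξ ∈ V with t(ξ) = 1. Then B(u, v) = 0 for all u, v ∈ V. -/
/-- A symmetric bilinear map `B : V × V → V` that vanishes on the
diagonal of the unit timelike vectors (those `ξ` with `t ξ = 1`, where `t` attains
the value 1) vanishes identically. -/
theorem maxwell_huygens_stmt5
    (V : Type*) [AddCommGroup V] [Module ℝ V]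
    (t : V →ₗ[ℝ] ℝ) (ht : ∃ ξ : V, t ξ = 1)
    (B : V →ₗ[ℝ] V →ₗ[ℝ] V)
    (hsymm : ∀ u v : V, B u v = B v u)
    (hdiag : ∀ ξ : V, t ξ = 1 → B ξ ξ = 0) :
    ∀ u v : V, B u v = 0 := by
  obtain ⟨ξ, hξ⟩ := ht
  have key : ∀ w : V, t w = 0 → B ξ w = 0 ∧ B w w = 0 := by
    intro w hw
    have h1 : B (ξ + w) (ξ + w) = 0 := hdiag _ (by simp [hξ, hw])
    have h2 : B (ξ + (2:ℝ) • w) (ξ + (2:ℝ) • w) = 0 :=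
      hdiag _ (by simp [hξ, hw])
    simp only [map_add, map_smul, LinearMap.add_apply, LinearMap.smul_apply,
      hdiag ξ hξ] at h1 h2
    rw [hsymm w ξ] at h1 h2
    have hBww : B w w = 0 := by
      linear_combination (norm := module) ((2:ℝ)⁻¹) • h2 - h1
    have hBxw : B ξ w = 0 := by
      linear_combination (norm := module) ((2:ℝ)⁻¹) • h1 - ((2:ℝ)⁻¹) • hBww
    exact ⟨hBxw, hBww⟩
  have keymix : ∀ w w' : V, t w = 0 → t w' = 0 → B w w' = 0 := by
    intro w w' hw hw'
    have h := (key (w + w') (by simp [hw, hw'])).2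
    simp only [map_add, LinearMap.add_apply] at h
    rw [hsymm w' w] at h
    linear_combination (norm := module) ((2:ℝ)⁻¹) • h -
      ((2:ℝ)⁻¹) • (key w hw).2 - ((2:ℝ)⁻¹) • (key w' hw').2
  intro u v
  have hu : t (u - t u • ξ) = 0 := by simp [hξ]
  have hv : t (v - t v • ξ) = 0 := by simp [hξ]
  have hdec : B u v = B (u - t u • ξ + t u • ξ) (v - t v • ξ + t v • ξ) := by
    norm_num
  rw [hdec]
  simp only [map_add, map_smul, LinearMap.add_apply, LinearMap.smul_apply]
  rw [keymix _ _ hu hv, hdiag ξ hξ, (key _ hv).1,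
    hsymm (u - t u • ξ) ξ, (key _ hu).1]
  simp
end

section
/- Let η : (Fin 4 → ℝ) → (Fin 4 → ℝ) be C^∞ with η(x)_0 = 0 for all x. Define the Christoffel field Γ : ℝ⁴ → Fin 4 → Fin 4 → Fin 4 → ℝ by Γ x a b c = η(x)_a if b = 0 and c = 0, and Γ x a b c = 0 otherwise, and define its curvature by R x a b c d = ∂_c(fun y => Γ y a d b)(x) − ∂_d(fun y => Γ y a c b)(x) + Σ_{n ∈ Fin 4} (Γ x a c n · Γ x n d b − Γ x a d n · Γ x n c b). Then R x a b c d = 0 for all x, a, b, c, d if and only if all spatial partial derivatives of η vanish, i.e., for all x, all a ∈ Fin 4, and all i ∈ {1,2,3}, ∂_i(fun y => η(y)_a)(x) = 0. -/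
/-- For the Christoffel field `Γ x a b c = η(x)_a` when `b = c = 0`
(and `0` otherwise), determined by a smooth spacelike field `η`, the associated
curvature `R` vanishes identically iff all spatial partial derivatives of `η`
vanish. Here `∂_a f x = fderiv ℝ f x (Pi.single a 1)`. -/
theorem maxwell_huygens_stmt8
    (η : (Fin 4 → ℝ) → (Fin 4 → ℝ)) (hη : ContDiff ℝ (⊤ : ℕ∞) η)
    (hspacelike : ∀ x : Fin 4 → ℝ, η x 0 = 0)
    (Γ : (Fin 4 → ℝ) → Fin 4 → Fin 4 → Fin 4 → ℝ)
    (hΓ : ∀ x a b c, Γ x a b c = if b = 0 ∧ c = 0 then η x a else 0)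
    (R : (Fin 4 → ℝ) → Fin 4 → Fin 4 → Fin 4 → Fin 4 → ℝ)
    (hR : ∀ x a b c d, R x a b c d =
      fderiv ℝ (fun y => Γ y a d b) x (Pi.single c 1)
      - fderiv ℝ (fun y => Γ y a c b) x (Pi.single d 1)
      + ∑ n : Fin 4, (Γ x a c n * Γ x n d b - Γ x a d n * Γ x n c b)) :
    (∀ x a b c d, R x a b c d = 0) ↔
      (∀ x : Fin 4 → ℝ, ∀ a i : Fin 4, i ≠ 0 →
        fderiv ℝ (fun y => η y a) x (Pi.single i 1) = 0) := by
  have fd : ∀ (P : Prop) [Decidable P] (a : Fin 4) (c : Fin 4) (x : Fin 4 → ℝ),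
      fderiv ℝ (fun y => if P then η y a else 0) x (Pi.single c 1)
        = if P then fderiv ℝ (fun y => η y a) x (Pi.single c 1) else 0 := by
    intro P _ a c x
    by_cases h : P
    · simp only [if_pos h]
    · simp only [if_neg h, fderiv_const]
      simp
  have key : ∀ x a b c d, R x a b c d =
      (if d = 0 ∧ b = 0 then fderiv ℝ (fun y => η y a) x (Pi.single c 1) else 0)
      - (if c = 0 ∧ b = 0 then fderiv ℝ (fun y => η y a) x (Pi.single d 1) else 0) := by
    intro x a b c d
    rw [hR]
    have e1 : (fun y => Γ y a d b) = fun y => if d = 0 ∧ b = 0 then η y a else 0 := by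
      funext y; exact hΓ y a d b
    have e2 : (fun y => Γ y a c b) = fun y => if c = 0 ∧ b = 0 then η y a else 0 := by
      funext y; exact hΓ y a c b
    have hsum : ∑ n : Fin 4, (Γ x a c n * Γ x n d b - Γ x a d n * Γ x n c b) = 0 := by
      apply Finset.sum_eq_zero
      intro n _
      rcases eq_or_ne n 0 with h | h <;> simp [hΓ, h, hspacelike]
    rw [e1, e2, hsum, fd, fd, add_zero]
  constructor
  · intro h x a i hi
    have := h x a 0 i 0
    rw [key] at this
    simpa [hi] using this
  · intro h x a b c d
    rw [key]
    rcases eq_or_ne b 0 with hb | hb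
    · rcases eq_or_ne c 0 with hc | hc <;> rcases eq_or_ne d 0 with hd | hd <;>
        simp [hb, hc, hd, h x a]
    · simp [hb]
end

section
/- Let φ, ρ : (Fin 4 → ℝ) → ℝ be C^∞ functions satisfying the Poisson equation Σ_{i=1}^{3} ∂_i(∂_iφ)(x) = 4π·ρ(x) for all x. Define the Christoffel field Γ : ℝ⁴ → Fin 4 → Fin 4 → Fin 4 → ℝ by Γ x a b c = ∂_aφ(x) if b = 0, c = 0, and a ∈ {1,2,3}, and Γ x a b c = 0 otherwise. Then the Ricci tensor R x b d := Σ_{a ∈ Fin 4} ∂_a(fun y => Γ y a b d)(x) − Σ_{a ∈ Fin 4} ∂_b(fun y => Γ y a a d)(x) + Σ_{a,n ∈ Fin 4} (Γ x a a n · Γ x n b d − Γ x a b n · Γ x n a d) satisfies: R x b d = 4π·ρ(x) if b = 0 and d = 0, and R x b d = 0 otherwise. That is, R_{bd} = 4πρ t_b t_d, the geometrized Poisson equation. -/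
/-- (Geometrization, coordinate computation) If `φ` satisfies the
Poisson equation `∑_{i≠0} ∂_i∂_iφ = 4πρ` and `Γ` is the Christoffel field
`Γ x a b c = ∂_aφ(x)` for `b = c = 0` and spatial `a` (else `0`), then the Ricci
tensor of `Γ` satisfies the geometrized Poisson equation `R_{bd} = 4πρ t_b t_d`.
Here `∂_a f x = fderiv ℝ f x (Pi.single a 1)`. -/
theorem maxwell_huygens_stmt9
    (φ ρ : (Fin 4 → ℝ) → ℝ) (hφ : ContDiff ℝ (⊤ : ℕ∞) φ) (hρ : ContDiff ℝ (⊤ : ℕ∞) ρ)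
    (hpoisson : ∀ x : Fin 4 → ℝ,
      ∑ i ∈ Finset.univ.filter (fun i : Fin 4 => i ≠ 0),
        fderiv ℝ (fun y => fderiv ℝ φ y (Pi.single i 1)) x (Pi.single i 1)
      = 4 * Real.pi * ρ x)
    (Γ : (Fin 4 → ℝ) → Fin 4 → Fin 4 → Fin 4 → ℝ)
    (hΓ : ∀ x a b c, Γ x a b c =
      if b = 0 ∧ c = 0 ∧ a ≠ 0 then fderiv ℝ φ x (Pi.single a 1) else 0)
    (R : (Fin 4 → ℝ) → Fin 4 → Fin 4 → ℝ)
    (hR : ∀ x b d, R x b d =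
      (∑ a : Fin 4, fderiv ℝ (fun y => Γ y a b d) x (Pi.single a 1))
      - (∑ a : Fin 4, fderiv ℝ (fun y => Γ y a a d) x (Pi.single b 1))
      + ∑ a : Fin 4, ∑ n : Fin 4,
          (Γ x a a n * Γ x n b d - Γ x a b n * Γ x n a d)) :
    ∀ x b d, R x b d = if b = 0 ∧ d = 0 then 4 * Real.pi * ρ x else 0 := by

  intro x b d
  have hfun : ∀ a b c : Fin 4, (fun y => Γ y a b c)
      = fun y => if b = 0 ∧ c = 0 ∧ a ≠ 0 then fderiv ℝ φ y (Pi.single a 1) else 0 := by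
    intro a b c; funext y; exact hΓ y a b c
  have hquad : ∀ a n : Fin 4, Γ x a a n * Γ x n b d - Γ x a b n * Γ x n a d = 0 := by
    intro a n
    rcases eq_or_ne a 0 with ha | ha
    · rw [hΓ x a a n, hΓ x a b n]
      rw [if_neg (by rintro ⟨_, _, h3⟩; exact h3 ha),
        if_neg (by rintro ⟨_, _, h3⟩; exact h3 ha)]
      ring
    · rw [hΓ x a a n, hΓ x n a d]
      rw [if_neg (by rintro ⟨h1, _, _⟩; exact ha h1),
        if_neg (by rintro ⟨h1, _, _⟩; exact ha h1)]
      ring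
  have hmid : ∀ a : Fin 4, (fun y => Γ y a a d) = fun _ => (0:ℝ) := by
    intro a; funext y; rw [hΓ]
    exact if_neg (by rintro ⟨h1, _, h3⟩; exact h3 h1)
  rw [hR]
  simp only [hmid, hquad, fderiv_fun_const, Pi.zero_apply, ContinuousLinearMap.zero_apply,
    Finset.sum_const_zero, sub_zero, add_zero]
  by_cases hbd : b = 0 ∧ d = 0
  · obtain ⟨hb, hd⟩ := hbd
    subst hb; subst hd
    rw [if_pos ⟨rfl, rfl⟩]
    have key : ∀ a : Fin 4, fderiv ℝ (fun y => Γ y a 0 0) x (Pi.single a 1)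
        = if a ≠ 0 then fderiv ℝ (fun y => fderiv ℝ φ y (Pi.single a 1)) x (Pi.single a 1)
          else 0 := by
      intro a
      rw [hfun a 0 0]
      by_cases ha : a = 0
      · simp [ha]
      · simp [ha]
    rw [Finset.sum_congr rfl (fun a _ => key a), ← Finset.sum_filter]
    exact hpoisson x
  · rw [if_neg hbd]
    have key : ∀ a : Fin 4, (fun y => Γ y a b d) = fun _ => (0:ℝ) := by
      intro a; funext y; rw [hΓ]
      exact if_neg (by rintro ⟨h1, h2, _⟩; exact hbd ⟨h1, h2⟩)
    simp [key]
end

section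
/- Let C : Fin 4 → Fin 4 → Fin 4 → ℝ (with C a b c representing C^a_{bc}) satisfy: (i) C a b c = C a c b for all a, b, c; (ii) C 0 b c = 0 for all b, c; and (iii) C j a k + C k a j = 0 for all a ∈ Fin 4 and all j, k ∈ {1,2,3}. Then there exists an antisymmetric κ : Fin 4 → Fin 4 → ℝ (κ b c = −κ c b) such that for all a, b, c: C a b c = 0 if a = 0, and C a b c = (if b = 0 then κ c a else 0) + (if c = 0 then κ b a else 0) if a ∈ {1,2,3}. Conversely, every C of this form satisfies (i)–(iii). -/
/-- (coordinate version of Malament's Prop. 4.1.3) A tensor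
`C^a_{bc}` is symmetric in `b,c`, annihilated by `t_a = dx⁰` (i.e. `C 0 b c = 0`),
and compatible with `h = diag(0,1,1,1)` (i.e. `C j a k + C k a j = 0` for spatial
`j,k`) iff it has the form `C^a_{bc} = 2 h^{an} t_{(b} κ_{c)n}` for an antisymmetric
`κ`. -/
theorem maxwell_huygens_stmt10
    (C : Fin 4 → Fin 4 → Fin 4 → ℝ) :
    ((∀ a b c, C a b c = C a c b) ∧
     (∀ b c, C 0 b c = 0) ∧
     (∀ a j k : Fin 4, j ≠ 0 → k ≠ 0 → C j a k + C k a j = 0))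
    ↔ ∃ κ : Fin 4 → Fin 4 → ℝ,
        (∀ b c, κ b c = - κ c b) ∧
        ∀ a b c, C a b c =
          if a = 0 then 0
          else (if b = 0 then κ c a else 0) + (if c = 0 then κ b a else 0) := by
  constructor
  · rintro ⟨hs, h0, h3⟩
    have hz : ∀ a b c : Fin 4, a ≠ 0 → b ≠ 0 → c ≠ 0 → C a b c = 0 := by
      intro a b c ha hb hc
      linarith [hs a b c, hs b c a, hs c a b, hs b a c, hs c b a,
        h3 c a b ha hb, h3 a b c hb hc, h3 b c a hc ha]
    refine ⟨fun x y => if x = 0 then (if y = 0 then 0 else C y 0 0 / 2)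
        else if y = 0 then -C x 0 0 / 2 else C y 0 x, ?_, ?_⟩
    · intro b c
      by_cases hb : b = 0
      · by_cases hc : c = 0 <;> simp [hb, hc] <;> ring
      · by_cases hc : c = 0
        · simp [hb, hc]; ring
        · simp [hb, hc]
          linarith [h3 0 c b hc hb]
    · intro a b c
      by_cases ha : a = 0
      · simp [ha, h0]
      by_cases hb : b = 0 <;> by_cases hc : c = 0 <;> simp [ha, hb, hc]
      · linarith [hs a b 0]
      · exact hz a b c ha hb hc
  · rintro ⟨κ, hk, hC⟩
    refine ⟨?_, ?_, ?_⟩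
    · intro a b c
      rw [hC a b c, hC a c b]
      by_cases ha : a = 0 <;> simp [ha] <;> ring
    · intro b c
      rw [hC 0 b c]; simp
    · intro a j k hj hk'
      rw [hC j a k, hC k a j]
      by_cases ha : a = 0 <;> simp [ha, hj, hk']
      linarith [hk k j]
end

section
/- Work on ℝ⁴ = (Fin 4 → ℝ). Let Γ : ℝ⁴ → Fin 4 → Fin 4 → Fin 4 → ℝ be C^∞ and satisfy at every point x: Γ x a b c = Γ x a c b; Γ x 0 b c = 0; and Γ x j a k + Γ x k a j = 0 for all a and all j, k ∈ {1,2,3} (so Γ represents a derivative operator ∇' compatible with the classical metrics), and suppose its curvature vanishes identically: R x a b c d := ∂_c(fun y => Γ y a d b)(x) − ∂_d(fun y => Γ y a c b)(x) + Σ_n (Γ x a c n · Γ x n d b − Γ x a d n · Γ x n c b) = 0 for all x, a, b, c, d (so ∇' is flat). Then the following are equivalent. (1) For every C^∞ vector field ξ : ℝ⁴ → (Fin 4 → ℝ) with ξ(x)_0 = 1 for all x: [for all x and all i, j ∈ {1,2,3}, ∂_i(fun y => ξ(y)_j)(x) − ∂_j(fun y => ξ(y)_i)(x) = 0] holds if and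 only if [for all x and all i, j ∈ {1,2,3}, ∂_i(fun y => ξ(y)_j)(x) + Σ_m Γ x j i m · ξ(x)_m − ∂_j(fun y => ξ(y)_i)(x) − Σ_m Γ x i j m · ξ(x)_m = 0] holds. (2) There exists a C^∞ function ψ : ℝ⁴ → ℝ with ∂_i(∂_jψ)(x) = 0 for all x and all i, j ∈ {1,2,3}, such that Γ x a b c = ∂_aψ(x) if b = 0, c = 0, and a ∈ {1,2,3}, and Γ x a b c = 0 otherwise. -/
/-- (coordinate formulation of Proposition 1) Let `Γ` be the smooth
Christoffel field of a torsion-free derivative operator `∇'` on ℝ⁴ compatible with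
the classical metrics `t_a = dx⁰` and `h = diag(0,1,1,1)`, and suppose `∇'` is flat
(its curvature relative to the flat coordinate operator `∇` vanishes). Then `∇` and
`∇'` agree on a standard of rotation (every smooth unit timelike field is
non-rotating for `∇` iff it is non-rotating for `∇'`) iff `Γ` arises from a scalar
field `ψ` with vanishing spatial Hessian via `Γ x a b c = ∂_aψ(x)` for `b = c = 0`
and spatial `a` (else `0`). Here `∂_a f x = fderiv ℝ f x (Pi.single a 1)`. -/
theorem maxwell_huygens_stmt11
    (Γ : (Fin 4 → ℝ) → Fin 4 → Fin 4 → Fin 4 → ℝ)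
    (hΓsmooth : ContDiff ℝ (⊤ : ℕ∞) Γ)
    (hsymm : ∀ x a b c, Γ x a b c = Γ x a c b)
    (htcompat : ∀ x b c, Γ x 0 b c = 0)
    (hhcompat : ∀ x : Fin 4 → ℝ, ∀ a j k : Fin 4, j ≠ 0 → k ≠ 0 →
      Γ x j a k + Γ x k a j = 0)
    (hflat : ∀ x a b c d,
      fderiv ℝ (fun y => Γ y a d b) x (Pi.single c 1)
      - fderiv ℝ (fun y => Γ y a c b) x (Pi.single d 1)
      + ∑ n : Fin 4, (Γ x a c n * Γ x n d b - Γ x a d n * Γ x n c b) = 0) :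
    (∀ ξ : (Fin 4 → ℝ) → (Fin 4 → ℝ), ContDiff ℝ (⊤ : ℕ∞) ξ → (∀ x, ξ x 0 = 1) →
      ((∀ x : Fin 4 → ℝ, ∀ i j : Fin 4, i ≠ 0 → j ≠ 0 →
          fderiv ℝ (fun y => ξ y j) x (Pi.single i 1)
          - fderiv ℝ (fun y => ξ y i) x (Pi.single j 1) = 0)
        ↔ (∀ x : Fin 4 → ℝ, ∀ i j : Fin 4, i ≠ 0 → j ≠ 0 →
          fderiv ℝ (fun y => ξ y j) x (Pi.single i 1)
          + (∑ m : Fin 4, Γ x j i m * ξ x m)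
          - fderiv ℝ (fun y => ξ y i) x (Pi.single j 1)
          - (∑ m : Fin 4, Γ x i j m * ξ x m) = 0)))
    ↔ (∃ ψ : (Fin 4 → ℝ) → ℝ, ContDiff ℝ (⊤ : ℕ∞) ψ ∧
        (∀ x : Fin 4 → ℝ, ∀ i j : Fin 4, i ≠ 0 → j ≠ 0 →
          fderiv ℝ (fun y => fderiv ℝ ψ y (Pi.single j 1)) x (Pi.single i 1) = 0) ∧
        ∀ x a b c, Γ x a b c =
          if b = 0 ∧ c = 0 ∧ a ≠ 0 then fderiv ℝ ψ x (Pi.single a 1) else 0) := by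
  have hg : ∀ a b c, ContDiff ℝ (⊤ : ℕ∞) (fun x => Γ x a b c) := by
    intro a b c
    exact (contDiff_pi.mp ((contDiff_pi.mp ((contDiff_pi.mp hΓsmooth) a)) b)) c
  -- purely spatial components vanish (algebra)
  have hA : ∀ x, ∀ i j k : Fin 4, i ≠ 0 → j ≠ 0 → k ≠ 0 → Γ x i j k = 0 := by
    intro x i j k hi hj hk
    have s1 := hsymm x i j k
    have s2 := hsymm x j k i
    have s3 := hsymm x k i j
    have e1 := hhcompat x k i j hi hj
    have e2 := hhcompat x i j k hj hk
    have e3 := hhcompat x j k i hk hi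
    linarith
  constructor
  · intro h1
    -- mixed components vanish, using condition (1) with the constant field e₀
    have hB : ∀ x, ∀ i k : Fin 4, i ≠ 0 → k ≠ 0 → Γ x i 0 k = 0 := by
      intro x i k hi hk
      have hcon := (h1 (fun _ => Pi.single (0 : Fin 4) (1 : ℝ)) contDiff_const
        (fun x => by simp)).mp (by intro x i j hi hj; simp)
      have h2 := hcon x k i hk hi
      simp only [Pi.single_apply, mul_ite, mul_one, mul_zero,
        Finset.sum_ite_eq', Finset.mem_univ, if_true, fderiv_fun_const,
        Pi.zero_apply, ContinuousLinearMap.zero_apply] at h2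
      have s1 := hsymm x i k 0
      have s2 := hsymm x k i 0
      have e1 := hhcompat x 0 i k hi hk
      linarith
    -- spatial derivatives of Γ^a₀₀ vanish (flatness)
    have hC : ∀ (x : Fin 4 → ℝ) (c : Fin 4), c ≠ 0 → ∀ a : Fin 4,
        fderiv ℝ (fun y => Γ y a 0 0) x (Pi.single c 1) = 0 := by
      intro x c hc a
      by_cases ha : a = 0
      · subst ha
        have hz0 : (fun y => Γ y 0 0 0) = fun _ => (0 : ℝ) :=
          funext fun y => htcompat y 0 0
        rw [hz0]
        simp
      · have hkey := hflat x a 0 c 0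
        have hz : (fun y => Γ y a c 0) = fun _ => (0 : ℝ) := by
          funext y
          rw [hsymm]
          exact hB y a c ha hc
        rw [hz] at hkey
        have hsum : ∑ n : Fin 4, (Γ x a c n * Γ x n 0 0 - Γ x a 0 n * Γ x n c 0) = 0 := by
          apply Finset.sum_eq_zero
          intro n _
          have h1' : Γ x a c n = 0 := by
            by_cases hn : n = 0
            · subst hn
              rw [hsymm]
              exact hB x a c ha hc
            · exact hA x a c n ha hc hn
          have h2' : Γ x n c 0 = 0 := by
            by_cases hn : n = 0
            · subst hn
              exact htcompat x c 0
            · rw [hsymm]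
              exact hB x n c hn hc
          rw [h1', h2']
          ring
        rw [hsum] at hkey
        simpa using hkey
    -- build ψ
    refine ⟨fun x => ∑ i : Fin 4, Γ x i 0 0 * x i, ?_, ?_, ?_⟩
    · exact ContDiff.sum fun i _ => (hg i 0 0).mul (contDiff_pi.mp contDiff_id i)
    all_goals {
      have hDψ : ∀ (x : Fin 4 → ℝ) (j : Fin 4), j ≠ 0 →
          fderiv ℝ (fun x => ∑ i : Fin 4, Γ x i 0 0 * x i) x (Pi.single j 1)
            = Γ x j 0 0 := by
        intro x j hj
        have hterm : ∀ i : Fin 4, HasFDerivAt (fun y => Γ y i 0 0 * y i)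
            ((Γ x i 0 0) • (ContinuousLinearMap.proj i :
                (Fin 4 → ℝ) →L[ℝ] ℝ)
              + (x i) • fderiv ℝ (fun y => Γ y i 0 0) x) x := by
          intro i
          exact (((hg i 0 0).differentiable (by simp)) x).hasFDerivAt.mul
            ((ContinuousLinearMap.proj i :
              (Fin 4 → ℝ) →L[ℝ] ℝ).hasFDerivAt)
        have hsum := HasFDerivAt.fun_sum
          (fun i (_ : i ∈ (Finset.univ : Finset (Fin 4))) => hterm i)
        rw [hsum.fderiv]
        simp only [ContinuousLinearMap.coe_sum', Finset.sum_apply,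
          ContinuousLinearMap.add_apply, ContinuousLinearMap.smul_apply,
          ContinuousLinearMap.proj_apply, smul_eq_mul]
        have hCz : ∀ i : Fin 4,
            fderiv ℝ (fun y => Γ y i 0 0) x (Pi.single j 1) = 0 :=
          fun i => hC x j hj i
        simp only [hCz, mul_zero, add_zero, Pi.single_apply, mul_ite, mul_one,
          mul_zero, Finset.sum_ite_eq', Finset.mem_univ, if_true]
      first
      | -- Hessian goal
        ( intro x i j hi hj
          have heq : (fun y => fderiv ℝ
              (fun x => ∑ i : Fin 4, Γ x i 0 0 * x i) y (Pi.single j 1))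
              = fun y => Γ y j 0 0 := funext fun y => hDψ y j hj
          rw [heq]
          exact hC x i hi j )
      | -- formula goal
        ( intro x a b c
          by_cases h : b = 0 ∧ c = 0 ∧ a ≠ 0
          · obtain ⟨hb, hc, ha⟩ := h
            subst hb; subst hc
            rw [if_pos ⟨rfl, rfl, ha⟩, hDψ x a ha]
          · rw [if_neg h]
            by_cases ha : a = 0
            · subst ha
              exact htcompat x b c
            · by_cases hb : b = 0
              · by_cases hc : c = 0
                · exact absurd ⟨hb, hc, ha⟩ h
                · subst hb
                  exact hB x a c ha hc
              · by_cases hc : c = 0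
                · subst hc
                  rw [hsymm]
                  exact hB x a b ha hb
                · exact hA x a b c ha hb hc ) }
  · rintro ⟨ψ, hψ, hhess, hform⟩ ξ hξ hξ0
    have hz : ∀ x (i j m : Fin 4), i ≠ 0 → Γ x j i m = 0 := by
      intro x i j m hi
      rw [hform x j i m, if_neg]
      rintro ⟨h0, -, -⟩
      exact hi h0
    constructor
    · intro h x i j hi hj
      have h' := h x i j hi hj
      have s1 : ∑ m : Fin 4, Γ x j i m * ξ x m = 0 :=
        Finset.sum_eq_zero fun m _ => by rw [hz x i j m hi]; ring
      have s2 : ∑ m : Fin 4, Γ x i j m * ξ x m = 0 :=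
        Finset.sum_eq_zero fun m _ => by rw [hz x j i m hj]; ring
      rw [s1, s2]
      linarith
    · intro h x i j hi hj
      have h' := h x i j hi hj
      have s1 : ∑ m : Fin 4, Γ x j i m * ξ x m = 0 :=
        Finset.sum_eq_zero fun m _ => by rw [hz x i j m hi]; ring
      have s2 : ∑ m : Fin 4, Γ x i j m * ξ x m = 0 :=
        Finset.sum_eq_zero fun m _ => by rw [hz x j i m hj]; ring
      rw [s1, s2] at h'
      linarith
end
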